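/- Let χ > 1 be a real number and let m ≥ 1 be an integer. Then χ·U_m(χ) = S_m(χ) − (1/2)·(P_{m+1}(χ) + P_{m−1}(χ)) − m·(P_{m+1}(χ) − P_{m−1}(χ)). -/

import Mathlib

open Real MeasureTheory

/-- `P χ m = ∫₀^{2π} cos(mφ)/√(χ − cos φ) dφ`. -/
noncomputable def P (χ : ℝ) (m : ℕ) : ℝ :=
  ∫ φ in (0:ℝ)..(2 * Real.pi), Real.cos (m * φ) / Real.sqrt (χ - Real.cos φ)

/-- `S χ m = ∫₀^{2π} cos(mφ)/(χ − cos φ)^{3/2} dφ`. -/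
noncomputable def S (χ : ℝ) (m : ℕ) : ℝ :=
  ∫ φ in (0:ℝ)..(2 * Real.pi), Real.cos (m * φ) / (χ - Real.cos φ) ^ (3/2 : ℝ)

/-- `U χ m = ∫₀^{2π} cos φ · cos(mφ)/(χ − cos φ)^{3/2} dφ`. -/
noncomputable def U (χ : ℝ) (m : ℕ) : ℝ :=
  ∫ φ in (0:ℝ)..(2 * Real.pi),
    Real.cos φ * Real.cos (m * φ) / (χ - Real.cos φ) ^ (3/2 : ℝ)

/-!
All three families are Fourier cosine coefficients `M s k = cosMoment χ s k`
of `(χ - cos φ) ^ s`: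
`P = M (-1/2)`, `S = M (-3/2)` and, by the product-to-sum formula, `U k = (S (k+1) + S (k-1)) / 2`.
Two relations link consecutive exponents: writing `χ = (χ - cos φ) + cos φ` gives
`χ M s k = (M s (k+1) + M s (k-1)) / 2 + M (s+1) k`, and integrating the derivative of the
periodic function `sin (kφ) (χ - cos φ) ^ (s+1)` over a period gives
`k M (s+1) k = (s+1)/2 (M s (k+1) - M s (k-1))`. The identity is a linear combination of these
at `k = m ± 1`; indices are taken in `ℤ` so that `m - 1` does not truncate.
-/

open intervalIntegral

noncomputable def cosMoment (χ s : ℝ) (k : ℤ) : ℝ :=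
  ∫ φ in (0:ℝ)..2 * π, cos (k * φ) * (χ - cos φ) ^ s

section cosMoment

variable {χ : ℝ} (hχ : 1 < χ)
include hχ

lemma sub_cos_pos (φ : ℝ) : 0 < χ - cos φ := by
  linarith [cos_le_one φ]

lemma continuous_sub_cos_rpow (s : ℝ) : Continuous fun φ => (χ - cos φ) ^ s :=
  (continuous_const.sub continuous_cos).rpow_const fun φ => Or.inl (sub_cos_pos hχ φ).ne'

lemma intervalIntegrable_mul_sub_cos_rpow {f : ℝ → ℝ} (hf : Continuous f) (s : ℝ) :
    IntervalIntegrable (fun φ => f φ * (χ - cos φ) ^ s) volume 0 (2 * π) :=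
  (hf.mul (continuous_sub_cos_rpow hχ s)).intervalIntegrable _ _

lemma integral_cos_mul_cos_mul_sub_cos_rpow (s : ℝ) (k : ℤ) :
    ∫ φ in (0:ℝ)..2 * π, cos φ * cos (k * φ) * (χ - cos φ) ^ s
      = (cosMoment χ s (k + 1) + cosMoment χ s (k - 1)) / 2 := by
  rw [cosMoment, cosMoment,
    ← integral_add (intervalIntegrable_mul_sub_cos_rpow hχ (by fun_prop) _)
    (intervalIntegrable_mul_sub_cos_rpow hχ (by fun_prop) _), ← intervalIntegral.integral_div]
  refine integral_congr fun φ _ => ?_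
  push_cast
  rw [add_mul, sub_mul, one_mul, cos_add, cos_sub]
  ring

lemma mul_cosMoment (s : ℝ) (k : ℤ) :
    χ * cosMoment χ s k
      = (cosMoment χ s (k + 1) + cosMoment χ s (k - 1)) / 2 + cosMoment χ (s + 1) k := by
  rw [← integral_cos_mul_cos_mul_sub_cos_rpow hχ, cosMoment, cosMoment,
    ← intervalIntegral.integral_const_mul,
    ← integral_add (intervalIntegrable_mul_sub_cos_rpow hχ (by fun_prop) _)
      (intervalIntegrable_mul_sub_cos_rpow hχ (by fun_prop) _)]
  refine integral_congr fun φ _ => ?_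
  rw [rpow_add (sub_cos_pos hχ φ), rpow_one]
  ring

lemma hasDerivAt_sin_mul_sub_cos_rpow (s : ℝ) (k : ℤ) (φ : ℝ) :
    HasDerivAt (fun φ => sin (k * φ) * (χ - cos φ) ^ (s + 1))
      (k * (cos (k * φ) * (χ - cos φ) ^ (s + 1))
        + (s + 1) / 2 * (cos ((k - 1 : ℤ) * φ) * (χ - cos φ) ^ s
          - cos ((k + 1 : ℤ) * φ) * (χ - cos φ) ^ s)) φ := by
  have hsin : HasDerivAt (fun φ => sin (k * φ)) (cos (k * φ) * k) φ := by
    simpa using ((hasDerivAt_id φ).const_mul (k : ℝ)).sin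
  have hbase : HasDerivAt (fun φ => χ - cos φ) (sin φ) φ := by
    simpa using (hasDerivAt_cos φ).const_sub χ
  have hpow := hbase.rpow_const (p := s + 1) (Or.inl (sub_cos_pos hχ φ).ne')
  rw [add_sub_cancel_right] at hpow
  refine (hsin.mul hpow).congr_deriv ?_
  push_cast
  rw [sub_mul, add_mul, one_mul, cos_sub, cos_add]
  ring

lemma intCast_mul_cosMoment_add_one (s : ℝ) (k : ℤ) :
    k * cosMoment χ (s + 1) k
      = (s + 1) / 2 * (cosMoment χ s (k + 1) - cosMoment χ s (k - 1)) := by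
  have hperiod : ∫ φ in (0:ℝ)..2 * π,
      (k * (cos (k * φ) * (χ - cos φ) ^ (s + 1))
        + (s + 1) / 2 * (cos ((k - 1 : ℤ) * φ) * (χ - cos φ) ^ s
          - cos ((k + 1 : ℤ) * φ) * (χ - cos φ) ^ s)) = 0 := by
    rw [integral_eq_sub_of_hasDerivAt (fun φ _ => hasDerivAt_sin_mul_sub_cos_rpow hχ s k φ)]
    · have h2π : (k : ℝ) * (2 * π) = ((2 * k : ℤ) : ℝ) * π := by push_cast; ring
      simp only [h2π, sin_int_mul_pi, mul_zero, sin_zero, zero_mul, sub_zero]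
    · exact (((intervalIntegrable_mul_sub_cos_rpow hχ (by fun_prop) _).const_mul _).add
        (((intervalIntegrable_mul_sub_cos_rpow hχ (by fun_prop) _).sub
          (intervalIntegrable_mul_sub_cos_rpow hχ (by fun_prop) _)).const_mul _))
  rw [integral_add (((intervalIntegrable_mul_sub_cos_rpow hχ (by fun_prop) _).const_mul _))
      (((intervalIntegrable_mul_sub_cos_rpow hχ (by fun_prop) _).sub
        (intervalIntegrable_mul_sub_cos_rpow hχ (by fun_prop) _)).const_mul _),
    intervalIntegral.integral_const_mul, intervalIntegral.integral_const_mul,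
    integral_sub (intervalIntegrable_mul_sub_cos_rpow hχ (by fun_prop) _)
      (intervalIntegrable_mul_sub_cos_rpow hχ (by fun_prop) _)] at hperiod
  change k * cosMoment χ (s + 1) k
    + (s + 1) / 2 * (cosMoment χ s (k - 1) - cosMoment χ s (k + 1)) = 0 at hperiod
  linarith

lemma P_eq_cosMoment (n : ℕ) : P χ n = cosMoment χ (-3/2 + 1) n := by
  refine integral_congr fun φ _ => ?_
  rw [sqrt_eq_rpow, div_eq_mul_inv, ← rpow_neg (sub_cos_pos hχ φ).le]
  norm_num

lemma S_eq_cosMoment (n : ℕ) : S χ n = cosMoment χ (-3/2) n := by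
  refine integral_congr fun φ _ => ?_
  rw [div_eq_mul_inv, ← rpow_neg (sub_cos_pos hχ φ).le]
  norm_num

lemma U_eq_cosMoment (n : ℕ) :
    U χ n = (cosMoment χ (-3/2) (n + 1) + cosMoment χ (-3/2) (n - 1)) / 2 := by
  rw [← integral_cos_mul_cos_mul_sub_cos_rpow hχ]
  refine integral_congr fun φ _ => ?_
  rw [div_eq_mul_inv, ← rpow_neg (sub_cos_pos hχ φ).le]
  norm_num

end cosMoment

theorem stmt_5 (χ : ℝ) (hχ : 1 < χ) (m : ℕ) (hm : 1 ≤ m) :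
    χ * U χ m = S χ m - (1/2) * (P χ (m + 1) + P χ (m - 1))
      - m * (P χ (m + 1) - P χ (m - 1)) := by
  have hcast : ((m - 1 : ℕ) : ℤ) = (m : ℤ) - 1 := by omega
  rw [U_eq_cosMoment hχ, S_eq_cosMoment hχ, P_eq_cosMoment hχ, P_eq_cosMoment hχ, hcast]
  push_cast
  have rec_succ := mul_cosMoment hχ (-3/2) ((m : ℤ) + 1)
  have rec_pred := mul_cosMoment hχ (-3/2) ((m : ℤ) - 1)
  have ibp_succ := intCast_mul_cosMoment_add_one hχ (-3/2) ((m : ℤ) + 1)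
  have ibp_pred := intCast_mul_cosMoment_add_one hχ (-3/2) ((m : ℤ) - 1)
  simp only [add_sub_cancel_right, sub_add_cancel] at rec_succ rec_pred ibp_succ ibp_pred
  push_cast at ibp_succ ibp_pred
  linear_combination (1/2) * rec_succ + (1/2) * rec_pred + ibp_succ - ibp_pred
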